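/- Nonlinear Young germs admit sewings: Let T > 0, d ≥ 1, C ≥ 0 and γ₀, γ₁ ∈ (0,1]. Let F assign to each pair 0 ≤ s ≤ t ≤ T a function F_{s,t} : ℝ^d → ℝ such that (i) F_{s,u}(x) + F_{u,t}(x) = F_{s,t}(x) for all 0 ≤ s ≤ u ≤ t ≤ T and all x ∈ ℝ^d, (ii) sup_{x∈ℝ^d} |F_{s,t}(x)| ≤ C (t−s)^{γ₀} for all s ≤ t, and (iii) |F_{s,t}(x) − F_{s,t}(y)| ≤ C (t−s)^{γ₁} |x − y| for all s ≤ t and x, y ∈ ℝ^d. Let X : [0,T] → ℝ^d satisfy |X(u) − X(v)| ≤ R |u−v|^ρ for some R ≥ 0, ρ ∈ (0,1] with ρ + γ₁ > 1. Then the germ A_{s,t} := F_{s,t}(X(s)) satisfies |A_{s,t}| ≤ C (t−s)^{γ₀} and |(δA)_{s,u,t}| ≤ C R (t−s)^{ρ+γ₁} for all 0 ≤ s ≤ u ≤ t ≤ T, and there exist a constant c > 0 depending only on ρ + γ₁ and a function 𝒜 : [0,T] → ℝ with 𝒜(0) = 0 such that |𝒜(t) − 𝒜(s) − F_{s,t}(X(s))|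 ≤ c C R (t−s)^{ρ+γ₁} for all 0 ≤ s ≤ t ≤ T. -/

import Mathlib

/-!
Additivity of `F` in time gives `(δA)_{s,u,t} = F_{u,t}(X_s) - F_{u,t}(X_u)`, which the spatial
Lipschitz bound of `F` and the Hölder bound of `X` control by `C R (t - s)^{ρ+γ₁}`. The rest is
the sewing lemma for a germ with `|δA| ≤ M (t - s)^α`, `α > 1`.

Project the dyadic grid of `[0, T]` of mesh `T / 2ⁿ` onto `[s, t]` and let `Sₙ(s, t)` be the
Riemann sum of `A` along it. Refining level `n` to `n + 1` costs one `δA` per cell, in total at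
most `M (T / 2ⁿ)^{α-1} (t - s)`, so `Sₙ(s, t)` converges geometrically to some `I(s, t)`. On the
finest level whose mesh is still at least `t - s`, at most one grid point lies in `(s, t)`, so
there `|Sₙ - A_{s,t}| ≤ M (t - s)^α`; adding the geometric tail bounds `|I - A|` by
`c M (t - s)^α`. The projected grids on `[s, u]` and `[u, t]` differ from the one on `[s, t]` only
in the cell containing `u`, so `I` is additive and `𝒜(t) = I(0, t)` works.
-/

open Finset Filter Topology

namespace Sewing

variable {A : ℝ → ℝ → ℝ} {T M α : ℝ}

def DefectBound (T M α : ℝ) (A : ℝ → ℝ → ℝ) : Prop :=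
  ∀ s u t, 0 ≤ s → s ≤ u → u ≤ t → t ≤ T → |A s t - A s u - A u t| ≤ M * (t - s) ^ α

namespace DefectBound

theorem apply_self_eq_zero (hA : DefectBound T M α A) (hα : 0 < α) {t : ℝ} (ht : 0 ≤ t)
    (htT : t ≤ T) : A t t = 0 := by
  have h := hA t t t ht le_rfl le_rfl htT
  simp only [sub_self, zero_sub, abs_neg, Real.zero_rpow hα.ne', mul_zero] at h
  exact abs_nonpos_iff.mp h

theorem nonneg (hA : DefectBound T M α A) (hT : 0 < T) : 0 ≤ M := by
  have h := (abs_nonneg _).trans (hA 0 0 T le_rfl le_rfl hT.le le_rfl)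
  rw [sub_zero] at h
  exact nonneg_of_mul_nonneg_left h (Real.rpow_pos_of_pos hT α)

theorem abs_add_sub_le (hA : DefectBound T M α A) {s u t : ℝ} (hs : 0 ≤ s) (hsu : s ≤ u)
    (hut : u ≤ t) (htT : t ≤ T) : |A s u + A u t - A s t| ≤ M * (t - s) ^ α := by
  rw [← abs_neg]
  convert hA s u t hs hsu hut htT using 2
  ring

theorem bound_nonneg (hA : DefectBound T M α A) {s t : ℝ} (hs : 0 ≤ s) (hst : s ≤ t)
    (htT : t ≤ T) : 0 ≤ M * (t - s) ^ α :=
  (abs_nonneg _).trans (hA s s t hs le_rfl hst htT)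

/-- `[min u a, min u b]` and `[max u a, max u b]` are the parts of `[a, b]` left and right
of `u`. -/
theorem abs_split_sub_le (hA : DefectBound T M α A) (hα : 0 < α) {a b u : ℝ} (ha : 0 ≤ a)
    (hab : a ≤ b) (hbT : b ≤ T) (hu : 0 ≤ u) (huT : u ≤ T) :
    |A (min u a) (min u b) + A (max u a) (max u b) - A a b| ≤ M * (b - a) ^ α := by
  rcases le_total u a with hua | hau
  · rw [min_eq_left hua, min_eq_left (hua.trans hab), max_eq_right hua,
      max_eq_right (hua.trans hab), hA.apply_self_eq_zero hα hu huT, zero_add, sub_self,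
      abs_zero]
    exact hA.bound_nonneg ha hab hbT
  rcases le_total u b with hub | hbu
  · rw [min_eq_right hau, min_eq_left hub, max_eq_left hau, max_eq_right hub]
    exact hA.abs_add_sub_le ha hau hub hbT
  · rw [min_eq_right (hab.trans hbu), min_eq_right hbu, max_eq_left (hab.trans hbu),
      max_eq_left hbu, hA.apply_self_eq_zero hα hu huT, add_zero, sub_self, abs_zero]
    exact hA.bound_nonneg ha hab hbT

end DefectBound

theorem rpow_sub_one_mul_self {x : ℝ} (hx : 0 ≤ x) (hα : 0 < α) : x ^ (α - 1) * x = x ^ α := by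
  rw [← Real.rpow_add_one' hx (by rw [sub_add_cancel]; exact hα.ne'), sub_add_cancel]

theorem rpow_le_rpow_sub_one_mul {x h : ℝ} (hx : 0 ≤ x) (hxh : x ≤ h) (hα : 1 ≤ α) :
    x ^ α ≤ h ^ (α - 1) * x := by
  calc x ^ α = x ^ (α - 1) * x := (rpow_sub_one_mul_self hx (by linarith)).symm
    _ ≤ h ^ (α - 1) * x :=
        mul_le_mul_of_nonneg_right (Real.rpow_le_rpow hx hxh (by linarith)) hx

def clip (s t x : ℝ) : ℝ := max s (min t x)

section Clip

variable {s u t x y : ℝ}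

theorem clip_mem_Icc (hst : s ≤ t) : clip s t x ∈ Set.Icc s t :=
  ⟨le_max_left _ _, max_le hst (min_le_left _ _)⟩

theorem clip_of_le (hxs : x ≤ s) : clip s t x = s :=
  max_eq_left ((min_le_right _ _).trans hxs)

theorem clip_of_ge (hst : s ≤ t) (htx : t ≤ x) : clip s t x = t := by
  rw [clip, min_eq_left htx, max_eq_right hst]

theorem clip_monotone : Monotone (clip s t) :=
  fun _ _ h ↦ max_le_max le_rfl (min_le_min le_rfl h)

theorem clip_sub_clip_le (hxy : x ≤ y) : clip s t y - clip s t x ≤ y - x := by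
  simp only [clip, min_def, max_def]
  split_ifs <;> linarith

theorem min_clip (hsu : s ≤ u) (hut : u ≤ t) : min u (clip s t x) = clip s u x := by
  simp only [clip, min_def, max_def]
  split_ifs <;> linarith

theorem max_clip (hsu : s ≤ u) (hut : u ≤ t) : max u (clip s t x) = clip u t x := by
  simp only [clip, min_def, max_def]
  split_ifs <;> linarith

end Clip

/-- Projecting onto `[s, t]` turns a partition `g 0 ≤ … ≤ g N` of `[0, T]` into one of `[s, t]`. -/
def partSum (A : ℝ → ℝ → ℝ) (g : ℕ → ℝ) (N : ℕ) (s t : ℝ) : ℝ :=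
  ∑ k ∈ range N, A (clip s t (g k)) (clip s t (g (k + 1)))

section PartSum

variable {g : ℕ → ℝ} {s u t : ℝ}

theorem partSum_eq_of_forall_notMem (hA : ∀ x ∈ Set.Icc s t, A x x = 0) (hst : s ≤ t)
    (hg : Monotone g) :
    ∀ N, (∀ k, 0 < k → k < N → g k ∉ Set.Ioo s t) →
      partSum A g N s t = A (clip s t (g 0)) (clip s t (g N))
  | 0, _ => by simp [partSum, hA _ (clip_mem_Icc hst)]
  | N + 1, hN => by
    rw [partSum, sum_range_succ, ← partSum,
      partSum_eq_of_forall_notMem hA hst hg N fun k hk hkN ↦ hN k hk (by omega)]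
    rcases N.eq_zero_or_pos with rfl | hN0
    · rw [hA _ (clip_mem_Icc hst), zero_add]
    rcases not_and_or.mp (hN N hN0 (lt_add_one N)) with hgN | hgN
    · have hgN := not_lt.mp hgN
      rw [clip_of_le hgN, clip_of_le ((hg (Nat.zero_le N)).trans hgN),
        hA _ (Set.left_mem_Icc.mpr hst), zero_add]
    · have hgN := not_lt.mp hgN
      rw [clip_of_ge hst hgN, clip_of_ge hst (hgN.trans (hg (Nat.le_succ N))),
        hA _ (Set.right_mem_Icc.mpr hst), add_zero]

theorem partSum_eq_add_of_forall_notMem (hA : ∀ x ∈ Set.Icc s t, A x x = 0) (hst : s ≤ t)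
    (hg : Monotone g) {N i : ℕ} (hiN : i ≤ N)
    (hN : ∀ k, 0 < k → k < N → k ≠ i → g k ∉ Set.Ioo s t) :
    partSum A g N s t =
      A (clip s t (g 0)) (clip s t (g i)) + A (clip s t (g i)) (clip s t (g N)) := by
  obtain ⟨j, rfl⟩ := Nat.exists_eq_add_of_le hiN
  have hshift := partSum_eq_of_forall_notMem (g := fun k ↦ g (i + k)) hA hst
    (hg.comp fun _ _ h ↦ Nat.add_le_add_left h i) j
    fun k hk hkj ↦ hN (i + k) (by omega) (by omega) (by omega)
  rw [partSum, sum_range_add, ← partSum,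
    partSum_eq_of_forall_notMem hA hst hg i fun k hk hki ↦ hN k hk (by omega) (by omega)]
  exact congrArg _ hshift

theorem partSum_two_mul (g : ℕ → ℝ) (N : ℕ) :
    partSum A g (2 * N) s t = ∑ k ∈ range N,
      (A (clip s t (g (2 * k))) (clip s t (g (2 * k + 1))) +
        A (clip s t (g (2 * k + 1))) (clip s t (g (2 * k + 2)))) := by
  induction N with
  | zero => simp [partSum]
  | succ N ih =>
    rw [partSum] at ih ⊢
    rw [show 2 * (N + 1) = 2 * N + 1 + 1 by ring, sum_range_succ, sum_range_succ, ih,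
      sum_range_succ]
    ring

theorem DefectBound.abs_partSum_add_sub_le (hA : DefectBound T M α A) (hM : 0 ≤ M) (hα : 0 < α)
    (hg : Monotone g) {h : ℝ} (hmesh : ∀ k, g (k + 1) - g k ≤ h) (hs : 0 ≤ s) (hsu : s ≤ u)
    (hut : u ≤ t) (htT : t ≤ T) (N : ℕ) :
    |partSum A g N s u + partSum A g N u t - partSum A g N s t| ≤ N * (M * h ^ α) := by
  have hst := hsu.trans hut
  have hcell : ∀ k ∈ range N, |A (clip s u (g k)) (clip s u (g (k + 1))) +
      A (clip u t (g k)) (clip u t (g (k + 1))) - A (clip s t (g k)) (clip s t (g (k + 1)))|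
        ≤ M * h ^ α := by
    intro k _
    have hk := clip_mem_Icc (x := g k) hst
    have hk1 := clip_mem_Icc (x := g (k + 1)) hst
    have hle := clip_monotone (s := s) (t := t) (hg (Nat.le_succ k))
    rw [← min_clip hsu hut, ← min_clip hsu hut, ← max_clip hsu hut, ← max_clip hsu hut]
    refine (hA.abs_split_sub_le hα (hs.trans hk.1) hle (hk1.2.trans htT) (hs.trans hsu)
      (hut.trans htT)).trans (mul_le_mul_of_nonneg_left ?_ hM)
    exact Real.rpow_le_rpow (sub_nonneg.mpr hle)
      ((clip_sub_clip_le (hg (Nat.le_succ k))).trans (hmesh k)) hα.le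
  rw [partSum, partSum, partSum, ← sum_add_distrib, ← sum_sub_distrib]
  refine (abs_sum_le_sum_abs _ _).trans ((sum_le_sum hcell).trans_eq ?_)
  rw [sum_const, card_range, nsmul_eq_mul]

theorem DefectBound.abs_partSum_two_mul_sub_le (hA : DefectBound T M α A) (hM : 0 ≤ M) (hα : 1 ≤ α)
    (hg : Monotone g) {h : ℝ} (hmesh : ∀ k, g (2 * k + 2) - g (2 * k) ≤ h) (hs : 0 ≤ s)
    (hst : s ≤ t) (htT : t ≤ T) (N : ℕ) :
    |partSum A g (2 * N) s t - partSum A (fun k ↦ g (2 * k)) N s t| ≤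
      M * h ^ (α - 1) * (t - s) := by
  set a : ℕ → ℝ := fun k ↦ clip s t (g (2 * k))
  have hcell : ∀ k ∈ range N, |A (a k) (clip s t (g (2 * k + 1))) +
      A (clip s t (g (2 * k + 1))) (a (k + 1)) - A (a k) (a (k + 1))| ≤
        M * h ^ (α - 1) * (a (k + 1) - a k) := by
    intro k _
    have hk := clip_mem_Icc (x := g (2 * k)) hst
    have hk2 := clip_mem_Icc (x := g (2 * k + 2)) hst
    have h01 := clip_monotone (s := s) (t := t) (hg (Nat.le_succ (2 * k)))
    have h12 := clip_monotone (s := s) (t := t) (hg (Nat.le_succ (2 * k + 1)))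
    have hcell_le : a (k + 1) - a k ≤ h :=
      (clip_sub_clip_le (hg (by omega))).trans (hmesh k)
    refine (hA.abs_add_sub_le (hs.trans hk.1) h01 h12 (hk2.2.trans htT)).trans ?_
    rw [mul_assoc]
    exact mul_le_mul_of_nonneg_left
      (rpow_le_rpow_sub_one_mul (sub_nonneg.mpr (h01.trans h12)) hcell_le hα) hM
  rw [partSum_two_mul, partSum, ← sum_sub_distrib]
  refine (abs_sum_le_sum_abs _ _).trans ((sum_le_sum hcell).trans ?_)
  have hh : 0 ≤ h := (sub_nonneg.mpr (hg (by omega))).trans (hmesh 0)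
  have htel : a N - a 0 ≤ t - s :=
    sub_le_sub (clip_mem_Icc hst).2 (clip_mem_Icc hst).1
  rw [← mul_sum, sum_range_sub a]
  exact mul_le_mul_of_nonneg_left htel (mul_nonneg hM (Real.rpow_nonneg hh _))

end PartSum

noncomputable def dyadic (T : ℝ) (n k : ℕ) : ℝ := k * (T / 2 ^ n)

theorem dyadic_monotone (hT : 0 ≤ T) (n : ℕ) : Monotone (dyadic T n) :=
  fun _ _ h ↦ mul_le_mul_of_nonneg_right (Nat.cast_le.mpr h) (by positivity)

theorem dyadic_zero (T : ℝ) (n : ℕ) : dyadic T n 0 = 0 := by simp [dyadic]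

theorem dyadic_two_pow (T : ℝ) (n : ℕ) : dyadic T n (2 ^ n) = T := by
  simp [dyadic, mul_div_cancel₀]

theorem dyadic_succ_two_mul (T : ℝ) (n k : ℕ) : dyadic T (n + 1) (2 * k) = dyadic T n k := by
  simp only [dyadic, pow_succ]
  push_cast
  field_simp

theorem dyadic_add_one_sub (T : ℝ) (n k : ℕ) : dyadic T n (k + 1) - dyadic T n k = T / 2 ^ n := by
  simp only [dyadic]
  push_cast
  ring

theorem dyadic_eq_of_mem_Ioo {s t : ℝ} (hT : 0 < T) {n k i : ℕ} (hts : t - s ≤ T / 2 ^ n)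
    (hk : dyadic T n k ∈ Set.Ioo s t) (hi : dyadic T n i ∈ Set.Ioo s t) : k = i := by
  have hgap : ∀ {k i : ℕ}, k < i → T / 2 ^ n ≤ dyadic T n i - dyadic T n k := fun {k i} hki ↦ by
    have : (k : ℝ) + 1 ≤ i := by exact_mod_cast hki
    simp only [dyadic]
    nlinarith [show 0 < T / 2 ^ n by positivity]
  rcases lt_trichotomy k i with hki | rfl | hik
  · linarith [hgap hki, hk.1, hi.2]
  · rfl
  · linarith [hgap hik, hk.2, hi.1]

theorem div_two_pow_rpow (hT : 0 ≤ T) (β : ℝ) (n : ℕ) :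
    (T / 2 ^ n) ^ β = T ^ β * ((2 : ℝ) ^ β)⁻¹ ^ n := by
  rw [Real.div_rpow hT (by positivity), ← Real.rpow_pow_comm zero_le_two, inv_pow, div_eq_mul_inv]

theorem exists_le_div_two_pow_le {x : ℝ} (hx : 0 < x) (hxT : x ≤ T) :
    ∃ n : ℕ, x ≤ T / 2 ^ n ∧ T / 2 ^ n ≤ 2 * x := by
  obtain ⟨n, hn, hn1⟩ := exists_nat_pow_near ((one_le_div hx).mpr hxT) one_lt_two
  refine ⟨n, ?_, ?_⟩
  · rw [le_div_iff₀ (by positivity), mul_comm]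
    exact (le_div_iff₀ hx).mp hn
  · have hT2 := (div_lt_iff₀ hx).mp hn1
    rw [pow_succ] at hT2
    rw [div_le_iff₀ (by positivity)]
    linarith

noncomputable def dyadicSum (A : ℝ → ℝ → ℝ) (T : ℝ) (n : ℕ) (s t : ℝ) : ℝ :=
  partSum A (dyadic T n) (2 ^ n) s t

section DyadicSum

variable {s u t : ℝ}

theorem DefectBound.abs_dyadicSum_sub_le_of_le (hA : DefectBound T M α A) (hα : 0 < α)
    (hT : 0 < T) (hs : 0 ≤ s) (hst : s ≤ t) (htT : t ≤ T) {n : ℕ} (hts : t - s ≤ T / 2 ^ n) :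
    |dyadicSum A T n s t - A s t| ≤ M * (t - s) ^ α := by
  have hdiag : ∀ x ∈ Set.Icc s t, A x x = 0 := fun x hx ↦
    hA.apply_self_eq_zero hα (hs.trans hx.1) (hx.2.trans htT)
  obtain ⟨i, hi, hunique⟩ : ∃ i ≤ 2 ^ n, ∀ k, 0 < k → k < 2 ^ n → k ≠ i →
      dyadic T n k ∉ Set.Ioo s t := by
    by_cases hex : ∃ i < 2 ^ n, dyadic T n i ∈ Set.Ioo s t
    · obtain ⟨i, hi, hmem⟩ := hex
      exact ⟨i, hi.le, fun k _ _ hki hk ↦ hki (dyadic_eq_of_mem_Ioo hT hts hk hmem)⟩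
    · push Not at hex
      exact ⟨0, Nat.zero_le _, fun k _ hk _ ↦ hex k hk⟩
  rw [dyadicSum, partSum_eq_add_of_forall_notMem hdiag hst (dyadic_monotone hT.le n) hi hunique,
    dyadic_zero, dyadic_two_pow, clip_of_le hs, clip_of_ge hst htT]
  have hp := clip_mem_Icc (x := dyadic T n i) hst
  exact hA.abs_add_sub_le hs hp.1 hp.2 htT

theorem DefectBound.abs_dyadicSum_succ_sub_le (hA : DefectBound T M α A) (hα : 1 ≤ α)
    (hT : 0 < T) (hs : 0 ≤ s) (hst : s ≤ t) (htT : t ≤ T) (n : ℕ) :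
    |dyadicSum A T (n + 1) s t - dyadicSum A T n s t| ≤ M * (T / 2 ^ n) ^ (α - 1) * (t - s) := by
  have hmesh : ∀ k, dyadic T (n + 1) (2 * k + 2) - dyadic T (n + 1) (2 * k) ≤ T / 2 ^ n := by
    intro k
    rw [show 2 * k + 2 = 2 * (k + 1) by ring, dyadic_succ_two_mul, dyadic_succ_two_mul,
      dyadic_add_one_sub]
  have h := hA.abs_partSum_two_mul_sub_le (hA.nonneg hT) hα (dyadic_monotone hT.le (n + 1)) hmesh
    hs hst htT (2 ^ n)
  rwa [← pow_succ', funext (dyadic_succ_two_mul T n)] at h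

theorem DefectBound.abs_dyadicSum_add_sub_le (hA : DefectBound T M α A) (hα : 0 < α)
    (hT : 0 < T) (hs : 0 ≤ s) (hsu : s ≤ u) (hut : u ≤ t) (htT : t ≤ T) (n : ℕ) :
    |dyadicSum A T n s u + dyadicSum A T n u t - dyadicSum A T n s t| ≤
      2 ^ n * (M * (T / 2 ^ n) ^ α) := by
  have h := hA.abs_partSum_add_sub_le (hA.nonneg hT) hα (dyadic_monotone hT.le n)
    (fun k ↦ (dyadic_add_one_sub T n k).le) hs hsu hut htT (2 ^ n)
  exact_mod_cast h

end DyadicSum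

noncomputable def sewingMap (A : ℝ → ℝ → ℝ) (T s t : ℝ) : ℝ :=
  limUnder atTop fun n ↦ dyadicSum A T n s t

noncomputable def sewingConst (α : ℝ) : ℝ := 1 + 2 ^ (α - 1) / (1 - ((2 : ℝ) ^ (α - 1))⁻¹)

theorem two_rpow_inv_lt_one (hα : 1 < α) : ((2 : ℝ) ^ (α - 1))⁻¹ < 1 :=
  inv_lt_one_of_one_lt₀ (Real.one_lt_rpow one_lt_two (sub_pos.mpr hα))

theorem sewingConst_pos (hα : 1 < α) : 0 < sewingConst α := by
  have := sub_pos.mpr (two_rpow_inv_lt_one hα)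
  unfold sewingConst
  positivity

section SewingMap

variable {s u t : ℝ}

theorem DefectBound.dist_dyadicSum_le_geometric (hA : DefectBound T M α A) (hα : 1 ≤ α)
    (hT : 0 < T) (hs : 0 ≤ s) (hst : s ≤ t) (htT : t ≤ T) (n : ℕ) :
    dist (dyadicSum A T n s t) (dyadicSum A T (n + 1) s t) ≤
      M * T ^ (α - 1) * (t - s) * ((2 : ℝ) ^ (α - 1))⁻¹ ^ n := by
  rw [dist_comm, Real.dist_eq]
  refine (hA.abs_dyadicSum_succ_sub_le hα hT hs hst htT n).trans_eq ?_
  rw [div_two_pow_rpow hT.le]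
  ring

theorem DefectBound.tendsto_dyadicSum (hA : DefectBound T M α A) (hα : 1 < α) (hT : 0 < T)
    (hs : 0 ≤ s) (hst : s ≤ t) (htT : t ≤ T) :
    Tendsto (fun n ↦ dyadicSum A T n s t) atTop (𝓝 (sewingMap A T s t)) :=
  (cauchySeq_of_le_geometric _ _ (two_rpow_inv_lt_one hα)
    (hA.dist_dyadicSum_le_geometric hα.le hT hs hst htT)).tendsto_limUnder

theorem DefectBound.sewingMap_add (hA : DefectBound T M α A) (hα : 1 < α) (hT : 0 < T)
    (hs : 0 ≤ s) (hsu : s ≤ u) (hut : u ≤ t) (htT : t ≤ T) :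
    sewingMap A T s u + sewingMap A T u t = sewingMap A T s t := by
  have hlim := ((hA.tendsto_dyadicSum hα hT hs hsu (hut.trans htT)).add
    (hA.tendsto_dyadicSum hα hT (hs.trans hsu) hut htT)).sub
    (hA.tendsto_dyadicSum hα hT hs (hsu.trans hut) htT)
  have hzero : Tendsto (fun n ↦ dyadicSum A T n s u + dyadicSum A T n u t -
      dyadicSum A T n s t) atTop (𝓝 0) := by
    have hgeom := (tendsto_pow_atTop_nhds_zero_of_lt_one (by positivity)
      (two_rpow_inv_lt_one hα)).const_mul (M * T ^ (α - 1) * T)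
    rw [mul_zero] at hgeom
    refine squeeze_zero_norm (fun n ↦ (hA.abs_dyadicSum_add_sub_le (by linarith) hT hs hsu hut
      htT n).trans_eq ?_) hgeom
    rw [← rpow_sub_one_mul_self (by positivity) (by linarith), div_two_pow_rpow hT.le]
    field_simp
  linarith [tendsto_nhds_unique hlim hzero]

theorem DefectBound.abs_sewingMap_sub_le (hA : DefectBound T M α A) (hα : 1 < α) (hT : 0 < T)
    (hs : 0 ≤ s) (hst : s ≤ t) (htT : t ≤ T) :
    |sewingMap A T s t - A s t| ≤ sewingConst α * M * (t - s) ^ α := by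
  have hM := hA.nonneg hT
  rcases hst.eq_or_lt with rfl | hst'
  · have h0 : sewingMap A T s s = 0 := by linarith [hA.sewingMap_add hα hT hs le_rfl le_rfl htT]
    rw [h0, hA.apply_self_eq_zero (by linarith) hs htT, sub_zero, abs_zero]
    exact mul_nonneg (mul_nonneg (sewingConst_pos hα).le hM) (Real.rpow_nonneg (sub_self s).ge _)
  set r := ((2 : ℝ) ^ (α - 1))⁻¹
  have hr := sub_pos.mpr (two_rpow_inv_lt_one hα)
  -- compare with the finest dyadic level on which `[s, t]` contains at most one grid point
  obtain ⟨m, hm, hm2⟩ := exists_le_div_two_pow_le (sub_pos.mpr hst') (by linarith : t - s ≤ T)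
  have htail : dist (dyadicSum A T m s t) (sewingMap A T s t) ≤
      2 ^ (α - 1) / (1 - r) * M * (t - s) ^ α := calc
    _ ≤ M * T ^ (α - 1) * (t - s) * r ^ m / (1 - r) :=
      dist_le_of_le_geometric_of_tendsto r _ (two_rpow_inv_lt_one hα)
        (hA.dist_dyadicSum_le_geometric hα.le hT hs hst htT)
        (hA.tendsto_dyadicSum hα hT hs hst htT) m
    _ = M * (T / 2 ^ m) ^ (α - 1) * (t - s) / (1 - r) := by
      rw [div_two_pow_rpow hT.le]
      ring
    _ ≤ M * (2 * (t - s)) ^ (α - 1) * (t - s) / (1 - r) := by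
      gcongr
    _ = 2 ^ (α - 1) / (1 - r) * M * (t - s) ^ α := by
      rw [Real.mul_rpow zero_le_two (sub_nonneg.mpr hst), ← rpow_sub_one_mul_self
        (sub_nonneg.mpr hst) (by linarith : 0 < α)]
      ring
  have hcoarse := hA.abs_dyadicSum_sub_le_of_le (by linarith) hT hs hst htT hm
  rw [Real.dist_eq, abs_sub_comm] at htail
  calc |sewingMap A T s t - A s t|
      ≤ |sewingMap A T s t - dyadicSum A T m s t| + |dyadicSum A T m s t - A s t| :=
        abs_sub_le _ _ _
    _ ≤ sewingConst α * M * (t - s) ^ α := by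
      rw [sewingConst]
      linarith

end SewingMap

theorem DefectBound.exists_sewing (hA : DefectBound T M α A) (hα : 1 < α) (hT : 0 < T) :
    ∃ 𝒜 : ℝ → ℝ, 𝒜 0 = 0 ∧ ∀ s t, 0 ≤ s → s ≤ t → t ≤ T →
      |𝒜 t - 𝒜 s - A s t| ≤ sewingConst α * M * (t - s) ^ α := by
  refine ⟨sewingMap A T 0, ?_, fun s t hs hst htT ↦ ?_⟩
  · linarith [hA.sewingMap_add hα hT le_rfl le_rfl le_rfl hT.le]
  · rw [← hA.sewingMap_add hα hT le_rfl hs hst htT, add_sub_cancel_left]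
    exact hA.abs_sewingMap_sub_le hα hT hs hst htT

theorem defectBound_nonlinearYoung {E : Type*} [SeminormedAddCommGroup E] {F : ℝ → ℝ → E → ℝ}
    {X : ℝ → E} {C R ρ γ : ℝ} (hC : 0 ≤ C) (hR : 0 ≤ R) (hρ : 0 ≤ ρ) (hγ : 0 ≤ γ)
    (hadd : ∀ s u t : ℝ, 0 ≤ s → s ≤ u → u ≤ t → t ≤ T → ∀ x, F s u x + F u t x = F s t x)
    (hlip : ∀ s t : ℝ, 0 ≤ s → s ≤ t → t ≤ T →
      ∀ x y, |F s t x - F s t y| ≤ C * (t - s) ^ γ * ‖x - y‖)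
    (hX : ∀ u v : ℝ, u ∈ Set.Icc 0 T → v ∈ Set.Icc 0 T → ‖X u - X v‖ ≤ R * |u - v| ^ ρ) :
    DefectBound T (C * R) (ρ + γ) fun s t ↦ F s t (X s) := by
  intro s u t hs hsu hut htT
  have hδ : F s t (X s) - F s u (X s) - F u t (X u) = F u t (X s) - F u t (X u) := by
    linarith [hadd s u t hs hsu hut htT (X s)]
  have hX' := hX s u ⟨hs, (hsu.trans hut).trans htT⟩ ⟨hs.trans hsu, hut.trans htT⟩
  rw [abs_sub_comm, abs_of_nonneg (sub_nonneg.mpr hsu)] at hX'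
  calc |F s t (X s) - F s u (X s) - F u t (X u)|
      ≤ C * (t - u) ^ γ * (R * (u - s) ^ ρ) := by
        rw [hδ]
        refine (hlip u t (hs.trans hsu) hut htT _ _).trans ?_
        gcongr
    _ ≤ C * (t - s) ^ γ * (R * (t - s) ^ ρ) := by
        have : 0 ≤ C * (t - s) ^ γ := mul_nonneg hC (Real.rpow_nonneg (by linarith) _)
        gcongr
    _ = C * R * (t - s) ^ (ρ + γ) := by
      rw [Real.rpow_add_of_nonneg (by linarith) hρ hγ]
      ring

end Sewing

theorem nonlinear_young_germ_sewing_general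
    (T : ℝ) (hT : 0 < T) (d : ℕ) (C γ₀ γ₁ R ρ : ℝ)
    (hC : 0 ≤ C) (hγ₁ : 0 < γ₁)
    (hR : 0 ≤ R) (hρ : 0 < ρ) (hργ₁ : 1 < ρ + γ₁)
    (F : ℝ → ℝ → EuclideanSpace ℝ (Fin d) → ℝ)
    (hadd : ∀ s u t : ℝ, 0 ≤ s → s ≤ u → u ≤ t → t ≤ T →
      ∀ x, F s u x + F u t x = F s t x)
    (hbd : ∀ s t : ℝ, 0 ≤ s → s ≤ t → t ≤ T → ∀ x, |F s t x| ≤ C * (t - s) ^ γ₀)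
    (hlip : ∀ s t : ℝ, 0 ≤ s → s ≤ t → t ≤ T →
      ∀ x y, |F s t x - F s t y| ≤ C * (t - s) ^ γ₁ * ‖x - y‖)
    (X : ℝ → EuclideanSpace ℝ (Fin d))
    (hX : ∀ u v : ℝ, u ∈ Set.Icc (0 : ℝ) T → v ∈ Set.Icc (0 : ℝ) T →
      ‖X u - X v‖ ≤ R * |u - v| ^ ρ) :
    (∀ s t : ℝ, 0 ≤ s → s ≤ t → t ≤ T → |F s t (X s)| ≤ C * (t - s) ^ γ₀) ∧
    (∀ s u t : ℝ, 0 ≤ s → s ≤ u → u ≤ t → t ≤ T →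
      |F s t (X s) - F s u (X s) - F u t (X u)| ≤ C * R * (t - s) ^ (ρ + γ₁)) ∧
    ∃ c : ℝ, 0 < c ∧ ∃ 𝒜 : ℝ → ℝ, 𝒜 0 = 0 ∧
      ∀ s t : ℝ, 0 ≤ s → s ≤ t → t ≤ T →
        |𝒜 t - 𝒜 s - F s t (X s)| ≤ c * C * R * (t - s) ^ (ρ + γ₁) := by
  have hA : Sewing.DefectBound T (C * R) (ρ + γ₁) fun s t ↦ F s t (X s) :=
    Sewing.defectBound_nonlinearYoung hC hR hρ.le hγ₁.le hadd hlip hX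
  obtain ⟨𝒜, h𝒜0, h𝒜⟩ := hA.exists_sewing hργ₁ hT
  refine ⟨fun s t hs hst htT ↦ hbd s t hs hst htT (X s), hA, Sewing.sewingConst (ρ + γ₁),
    Sewing.sewingConst_pos hργ₁, 𝒜, h𝒜0, fun s t hs hst htT ↦ ?_⟩
  simpa only [mul_assoc] using h𝒜 s t hs hst htT

/-- Nonlinear Young germs admit sewings: if the two-parameter family `F_{s,t} : ℝ^d → ℝ`
is additive in time, uniformly bounded by `C (t−s)^{γ₀}` and Lipschitz in space with
constant `C (t−s)^{γ₁}`, and `X : [0,T] → ℝ^d` is `ρ`-Hölder with constant `R` where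
`ρ + γ₁ > 1`, then the germ `A_{s,t} = F_{s,t}(X(s))` satisfies `|A_{s,t}| ≤ C (t−s)^{γ₀}`
and `|(δA)_{s,u,t}| ≤ C R (t−s)^{ρ+γ₁}`, and there are `c > 0` (depending only on
`ρ + γ₁`) and `𝒜 : [0,T] → ℝ` with `𝒜(0) = 0` and
`|𝒜(t) − 𝒜(s) − F_{s,t}(X(s))| ≤ c C R (t−s)^{ρ+γ₁}` for `0 ≤ s ≤ t ≤ T`. -/
theorem nonlinear_young_germ_sewing
    (T : ℝ) (hT : 0 < T) (d : ℕ) (hd : 1 ≤ d) (C γ₀ γ₁ R ρ : ℝ)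
    (hC : 0 ≤ C) (hγ₀ : 0 < γ₀) (hγ₀1 : γ₀ ≤ 1) (hγ₁ : 0 < γ₁) (hγ₁1 : γ₁ ≤ 1)
    (hR : 0 ≤ R) (hρ : 0 < ρ) (hρ1 : ρ ≤ 1) (hργ₁ : 1 < ρ + γ₁)
    (F : ℝ → ℝ → EuclideanSpace ℝ (Fin d) → ℝ)
    (hadd : ∀ s u t : ℝ, 0 ≤ s → s ≤ u → u ≤ t → t ≤ T →
      ∀ x, F s u x + F u t x = F s t x)
    (hbd : ∀ s t : ℝ, 0 ≤ s → s ≤ t → t ≤ T → ∀ x, |F s t x| ≤ C * (t - s) ^ γ₀)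
    (hlip : ∀ s t : ℝ, 0 ≤ s → s ≤ t → t ≤ T →
      ∀ x y, |F s t x - F s t y| ≤ C * (t - s) ^ γ₁ * ‖x - y‖)
    (X : ℝ → EuclideanSpace ℝ (Fin d))
    (hX : ∀ u v : ℝ, u ∈ Set.Icc (0 : ℝ) T → v ∈ Set.Icc (0 : ℝ) T →
      ‖X u - X v‖ ≤ R * |u - v| ^ ρ) :
    (∀ s t : ℝ, 0 ≤ s → s ≤ t → t ≤ T → |F s t (X s)| ≤ C * (t - s) ^ γ₀) ∧
    (∀ s u t : ℝ, 0 ≤ s → s ≤ u → u ≤ t → t ≤ T →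
      |F s t (X s) - F s u (X s) - F u t (X u)| ≤ C * R * (t - s) ^ (ρ + γ₁)) ∧
    ∃ c : ℝ, 0 < c ∧ ∃ 𝒜 : ℝ → ℝ, 𝒜 0 = 0 ∧
      ∀ s t : ℝ, 0 ≤ s → s ≤ t → t ≤ T →
        |𝒜 t - 𝒜 s - F s t (X s)| ≤ c * C * R * (t - s) ^ (ρ + γ₁) :=
  nonlinear_young_germ_sewing_general T hT d C γ₀ γ₁ R ρ hC hγ₁ hR hρ hργ₁ F hadd hbd hlip X hX
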